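/- Let S and O be finite nonempty sets and let M₁ = (r,p₁) and M₂ = (r,p₂) be SMDP models over (S,O) sharing the same reward function r with 0 ≤ r(s,o) ≤ Rmax, with ∑_{s'} p₁(s,o,s') ≤ γ̄ and ∑_{s'} p₂(s,o,s') ≤ γ̄ for all (s,o) where γ̄ < 1, and with max_{s,o} ∑_{s'} |p₁(s,o,s') − p₂(s,o,s')| ≤ γ̄ · ζ. Let Q₁ and Q₂ be Bellman-optimal value functions for M₁ and M₂. Then ‖Q₁ − Q₂‖_∞ ≤ ζ · γ̄ · Rmax / (1 − γ̄)². -/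

import Mathlib

/-!
The optimal values of both models are bounded by `Rmax / (1 - γ̄)`. Subtracting the two Bellman
equations splits `Q₁ - Q₂` into a `p₁`-average of the difference of the greedy state values, of
size at most `γ̄ ‖Q₁ - Q₂‖`, plus the model mismatch `p₁ - p₂` tested against the greedy values of
`Q₂`, of size at most `γ̄ ζ Rmax / (1 - γ̄)`. Solving `x ≤ γ̄ x + c` for `x = ‖Q₁ - Q₂‖` gives the
bound.
-/

/-- Maximum of a real-valued function over a finite nonempty type. -/
noncomputable def fmax {α : Type*} [Fintype α] [Nonempty α] (f : α → ℝ) : ℝ :=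
  Finset.univ.sup' Finset.univ_nonempty f

open Finset

section Fmax

variable {α : Type*} [Fintype α] [Nonempty α]

lemma le_fmax (f : α → ℝ) (a : α) : f a ≤ fmax f :=
  le_sup' f (mem_univ a)

lemma fmax_le {f : α → ℝ} {b : ℝ} (h : ∀ a, f a ≤ b) : fmax f ≤ b :=
  sup'_le _ _ fun a _ => h a

lemma fmax_nonneg {f : α → ℝ} (h : ∀ a, 0 ≤ f a) : 0 ≤ fmax f :=
  (h (Classical.arbitrary α)).trans (le_fmax f _)

lemma abs_fmax_sub_fmax_le (f g : α → ℝ) :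
    |fmax f - fmax g| ≤ fmax fun a => |f a - g a| := by
  have key : ∀ f g : α → ℝ, fmax f ≤ fmax g + fmax fun a => |f a - g a| := fun f g =>
    fmax_le fun a => by
      linarith [le_abs_self (f a - g a), le_fmax g a, le_fmax (fun a => |f a - g a|) a]
  rw [abs_sub_le_iff]
  refine ⟨by linarith [key f g], ?_⟩
  simp_rw [abs_sub_comm (f _)]
  linarith [key g f]

lemma abs_fmax_le (f : α → ℝ) : |fmax f| ≤ fmax fun a => |f a| := by
  obtain ⟨a⟩ := ‹Nonempty α›
  refine abs_le.2 ⟨?_, fmax_le fun a => (le_abs_self _).trans (le_fmax (fun a => |f a|) a)⟩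
  linarith [neg_abs_le (f a), le_fmax f a, le_fmax (fun a => |f a|) a]

end Fmax

lemma abs_sum_mul_le {ι : Type*} [Fintype ι] (w f : ι → ℝ) {B : ℝ} (hf : ∀ i, |f i| ≤ B) :
    |∑ i, w i * f i| ≤ (∑ i, |w i|) * B := by
  rw [sum_mul]
  refine (abs_sum_le_sum_abs _ _).trans (sum_le_sum fun i _ => ?_)
  rw [abs_mul]
  exact mul_le_mul_of_nonneg_left (hf i) (abs_nonneg _)

lemma le_div_one_sub_of_le_mul_add {x γ c : ℝ} (hγ : γ < 1) (h : x ≤ γ * x + c) :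
    x ≤ c / (1 - γ) := by
  rw [le_div_iff₀ (sub_pos.2 hγ)]
  linarith

namespace SMDP

variable {S O : Type*} [Fintype S] [Fintype O] [Nonempty S] [Nonempty O]

noncomputable def supNorm (Q : S → O → ℝ) : ℝ :=
  fmax fun so : S × O => |Q so.1 so.2|

def IsBellmanOptimal (r : S → O → ℝ) (p : S → O → S → ℝ) (Q : S → O → ℝ) : Prop :=
  ∀ s o, Q s o = r s o + ∑ s', p s o s' * fmax fun o' => Q s' o'

lemma supNorm_nonneg (Q : S → O → ℝ) : 0 ≤ supNorm Q :=
  fmax_nonneg fun _ => abs_nonneg _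

lemma abs_le_supNorm (Q : S → O → ℝ) (s : S) (o : O) : |Q s o| ≤ supNorm Q :=
  le_fmax (fun so : S × O => |Q so.1 so.2|) (s, o)

lemma supNorm_le {Q : S → O → ℝ} {b : ℝ} (h : ∀ s o, |Q s o| ≤ b) : supNorm Q ≤ b :=
  fmax_le fun so => h so.1 so.2

lemma abs_fmax_le_supNorm (Q : S → O → ℝ) (s : S) : |fmax fun o => Q s o| ≤ supNorm Q :=
  (abs_fmax_le _).trans (fmax_le fun o => abs_le_supNorm Q s o)

lemma abs_fmax_sub_fmax_le_supNorm (Q₁ Q₂ : S → O → ℝ) (s : S) :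
    |(fmax fun o => Q₁ s o) - fmax fun o => Q₂ s o| ≤ supNorm (Q₁ - Q₂) :=
  (abs_fmax_sub_fmax_le _ _).trans (fmax_le fun o => abs_le_supNorm (Q₁ - Q₂) s o)

lemma supNorm_le_of_isBellmanOptimal {r : S → O → ℝ} {p : S → O → S → ℝ} {Q : S → O → ℝ}
    {Rmax γ : ℝ} (hr0 : ∀ s o, 0 ≤ r s o) (hrR : ∀ s o, r s o ≤ Rmax)
    (hp : ∀ s o s', 0 ≤ p s o s') (hγ : ∀ s o, ∑ s', p s o s' ≤ γ) (hγlt : γ < 1)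
    (hQ : IsBellmanOptimal r p Q) : supNorm Q ≤ Rmax / (1 - γ) := by
  refine le_div_one_sub_of_le_mul_add hγlt (supNorm_le fun s o => ?_)
  have hmass : ∑ s', |p s o s'| ≤ γ := by simpa only [abs_of_nonneg (hp s o _)] using hγ s o
  calc |Q s o|
      ≤ |r s o| + |∑ s', p s o s' * fmax fun o' => Q s' o'| := by rw [hQ s o]; exact abs_add_le _ _
    _ ≤ Rmax + (∑ s', |p s o s'|) * supNorm Q := by
        gcongr
        · rw [abs_of_nonneg (hr0 s o)]; exact hrR s o
        · exact abs_sum_mul_le _ _ (abs_fmax_le_supNorm Q)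
    _ ≤ γ * supNorm Q + Rmax := by linarith [mul_le_mul_of_nonneg_right hmass (supNorm_nonneg Q)]

lemma supNorm_sub_le_of_isBellmanOptimal {r : S → O → ℝ} {p₁ p₂ : S → O → S → ℝ}
    {Q₁ Q₂ : S → O → ℝ} {γ δ : ℝ} (hp₁ : ∀ s o s', 0 ≤ p₁ s o s')
    (hγ₁ : ∀ s o, ∑ s', p₁ s o s' ≤ γ) (hδ : ∀ s o, ∑ s', |p₁ s o s' - p₂ s o s'| ≤ δ)
    (hQ₁ : IsBellmanOptimal r p₁ Q₁) (hQ₂ : IsBellmanOptimal r p₂ Q₂) :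
    supNorm (Q₁ - Q₂) ≤ γ * supNorm (Q₁ - Q₂) + δ * supNorm Q₂ := by
  refine supNorm_le fun s o => ?_
  have hmass : ∑ s', |p₁ s o s'| ≤ γ := by simpa only [abs_of_nonneg (hp₁ s o _)] using hγ₁ s o
  have hsplit : (Q₁ - Q₂) s o =
      (∑ s', p₁ s o s' * ((fmax fun o' => Q₁ s' o') - fmax fun o' => Q₂ s' o')) +
        ∑ s', (p₁ s o s' - p₂ s o s') * fmax fun o' => Q₂ s' o' := by
    rw [Pi.sub_apply, Pi.sub_apply, hQ₁ s o, hQ₂ s o, ← sum_add_distrib, add_sub_add_left_eq_sub,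
      ← sum_sub_distrib]
    exact sum_congr rfl fun s' _ => by ring
  calc |(Q₁ - Q₂) s o|
      ≤ (∑ s', |p₁ s o s'|) * supNorm (Q₁ - Q₂) +
          (∑ s', |p₁ s o s' - p₂ s o s'|) * supNorm Q₂ := by
        rw [hsplit]
        exact (abs_add_le _ _).trans (add_le_add
          (abs_sum_mul_le _ _ (abs_fmax_sub_fmax_le_supNorm Q₁ Q₂))
          (abs_sum_mul_le _ _ (abs_fmax_le_supNorm Q₂)))
    _ ≤ γ * supNorm (Q₁ - Q₂) + δ * supNorm Q₂ := by
        gcongr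
        · exact supNorm_nonneg _
        · exact supNorm_nonneg _
        · exact hδ s o

end SMDP

open SMDP

/-- Term (C) in the proof of Theorem 3: when the intent-induced SMDP's transition model
is within total variation `γ̄·ζ` of the true one and rewards coincide, the optimal option
value functions differ by at most `ζ γ̄ Rmax / (1 - γ̄)²`. -/
theorem intent_optimal_value_gap {S O : Type*} [Fintype S] [Fintype O] [Nonempty S] [Nonempty O]
    (r : S → O → ℝ) (p₁ p₂ : S → O → S → ℝ) (Rmax γbar ζ : ℝ)
    (hr0 : ∀ s o, 0 ≤ r s o) (hrR : ∀ s o, r s o ≤ Rmax)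
    (hp₁ : ∀ s o s', 0 ≤ p₁ s o s') (hp₂ : ∀ s o s', 0 ≤ p₂ s o s')
    (hγ₁ : ∀ s o, ∑ s' : S, p₁ s o s' ≤ γbar)
    (hγ₂ : ∀ s o, ∑ s' : S, p₂ s o s' ≤ γbar)
    (hγlt : γbar < 1)
    (hζ : fmax (fun so : S × O => ∑ s' : S, |p₁ so.1 so.2 s' - p₂ so.1 so.2 s'|) ≤ γbar * ζ)
    (Q₁ Q₂ : S → O → ℝ)
    (hQ₁ : ∀ s o, Q₁ s o = r s o + ∑ s' : S, p₁ s o s' * fmax (fun o' => Q₁ s' o'))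
    (hQ₂ : ∀ s o, Q₂ s o = r s o + ∑ s' : S, p₂ s o s' * fmax (fun o' => Q₂ s' o')) :
    fmax (fun so : S × O => |Q₁ so.1 so.2 - Q₂ so.1 so.2|) ≤
      ζ * γbar * Rmax / (1 - γbar) ^ 2 := by
  have hδ : ∀ s o, ∑ s', |p₁ s o s' - p₂ s o s'| ≤ γbar * ζ := fun s o =>
    (le_fmax (fun so : S × O => ∑ s', |p₁ so.1 so.2 s' - p₂ so.1 so.2 s'|) (s, o)).trans hζ
  have hδ0 : 0 ≤ γbar * ζ :=
    (fmax_nonneg fun _ => sum_nonneg fun _ _ => abs_nonneg _).trans hζ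
  have hN : supNorm Q₂ ≤ Rmax / (1 - γbar) :=
    supNorm_le_of_isBellmanOptimal hr0 hrR hp₂ hγ₂ hγlt hQ₂
  have hM : supNorm (Q₁ - Q₂) ≤ γbar * ζ * supNorm Q₂ / (1 - γbar) :=
    le_div_one_sub_of_le_mul_add hγlt
      (supNorm_sub_le_of_isBellmanOptimal hp₁ hγ₁ hδ hQ₁ hQ₂)
  calc supNorm (Q₁ - Q₂)
      ≤ γbar * ζ * supNorm Q₂ / (1 - γbar) := hM
    _ ≤ γbar * ζ * (Rmax / (1 - γbar)) / (1 - γbar) := by gcongr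
    _ = ζ * γbar * Rmax / (1 - γbar) ^ 2 := by
        field_simp
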